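/- arXiv:1809.07866 — 6 statements merged into one kernel-verified Lean document; each statement's English description precedes it below -/
import Mathlib

section
/- Let K ⊆ {2,3,...}, α = gcd{k-1 : k ∈ K} and β = gcd{k(k-1) : k ∈ K}. Then α divides β, and moreover gcd(α, β/α) = 1. -/
/-!
Every `k ∈ K` is coprime to `k - 1`, hence to `α`. Put `d = gcd(α, β/α)`. Then `α * d ∣ β ∣ k * (k - 1)`
and `α * d` is coprime to `k`, so `α * d ∣ k - 1` for every `k`, i.e. `α * d ∣ α`, and `d = 1`.
-/

theorem Nat.mul_gcd_div_dvd {a b : ℕ} (h : a ∣ b) : a * Nat.gcd a (b / a) ∣ b := by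
  obtain ⟨c, rfl⟩ := h
  rcases Nat.eq_zero_or_pos a with rfl | ha
  · simp
  · rw [Nat.mul_div_cancel_left c ha]
    exact mul_dvd_mul_left a (Nat.gcd_dvd_right a c)

theorem Nat.coprime_sub_one_self {k : ℕ} (hk : 1 ≤ k) : Nat.Coprime (k - 1) k := by
  obtain ⟨n, rfl⟩ := Nat.exists_eq_add_of_le' hk
  simp

namespace Finset

variable {ι : Type*} {s : Finset ι} {f g : ι → ℕ}

theorem gcd_dvd_gcd_mul_left : s.gcd f ∣ s.gcd (fun i => g i * f i) :=
  gcd_mono_fun fun _ _ => dvd_mul_left _ _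

theorem coprime_gcd_div_gcd_of_coprime (hcop : ∀ i ∈ s, Nat.Coprime (f i) (g i))
    (h0 : s.gcd f ≠ 0) :
    Nat.Coprime (s.gcd f) (s.gcd (fun i => g i * f i) / s.gcd f) := by
  set α := s.gcd f
  set d := Nat.gcd α (s.gcd (fun i => g i * f i) / α)
  have hαd : α * d ∣ s.gcd (fun i => g i * f i) := Nat.mul_gcd_div_dvd gcd_dvd_gcd_mul_left
  have hαd_dvd : α * d ∣ α := by
    refine dvd_gcd fun i hi => ?_
    have hαf : α ∣ f i := gcd_dvd hi
    have hdf : d ∣ f i := (Nat.gcd_dvd_left _ _).trans hαf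
    have hcop' : Nat.Coprime (α * d) (g i) :=
      ((hcop i hi).coprime_dvd_left hαf).mul_left ((hcop i hi).coprime_dvd_left hdf)
    exact hcop'.dvd_of_dvd_mul_left (hαd.trans (gcd_dvd hi))
  exact Nat.dvd_one.mp <| (Nat.mul_dvd_mul_iff_left (Nat.pos_of_ne_zero h0)).mp <| by
    rwa [mul_one]

end Finset

/-- For a nonempty set K of integers ≥ 2, with
α = gcd{k-1 : k ∈ K} and β = gcd{k(k-1) : k ∈ K}, α divides β and
gcd(α, β/α) = 1. -/
theorem alpha_dvd_beta_and_coprime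
    (K : Finset ℕ) (hne : K.Nonempty) (hK : ∀ k ∈ K, 2 ≤ k) :
    K.gcd (fun k => k - 1) ∣ K.gcd (fun k => k * (k - 1)) ∧
    Nat.Coprime (K.gcd (fun k => k - 1))
      (K.gcd (fun k => k * (k - 1)) / K.gcd (fun k => k - 1)) := by
  have hα : K.gcd (fun k => k - 1) ≠ 0 := by
    obtain ⟨k, hk⟩ := hne
    intro h
    have := Finset.gcd_eq_zero_iff.mp h k hk
    have := hK k hk
    omega
  exact ⟨Finset.gcd_dvd_gcd_mul_left, Finset.coprime_gcd_div_gcd_of_coprime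
    (fun k hk => Nat.coprime_sub_one_self (one_le_two.trans (hK k hk))) hα⟩
end

section
/- Suppose there exists an IGDD((g;h)^u, K) and an IPBD((x;y),K) with g - h = x - y and y ≥ h. Then there exists an IPBD((v;w),K) with v - w = u(x-y) and w = (u-1)h + y. -/
/-!
Take `u` groups `{i} × Fin g` and a set `Y` of `y - h` further points shared by all groups.
Copy the IPBD onto each group together with `Y`, its hole going to the group's hole together
with `Y`, and add the blocks of the IGDD. A pair outside the new hole either lies in two
distinct groups, where the IGDD covers it, or lies inside one group together with `Y`, where that
group's copy of the IPBD covers it. It is covered only once because an IGDD block never meets a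
group twice and a copied block meets no other group. The new hole, the group holes together
with `Y`, has `u h + (y - h)` points.
-/

/-- Existence of an incomplete pairwise balanced design IPBD((v;w),K). -/
def IsIPBD (v w : ℕ) (K : Finset ℕ) : Prop :=
  ∃ (W : Finset (Fin v)) (B : Finset (Finset (Fin v))),
    W.card = w ∧
    (∀ b ∈ B, b.card ∈ K) ∧
    (∀ b ∈ B, ∀ x ∈ W, ∀ y ∈ W, x ∈ b → y ∈ b → x = y) ∧
    (∀ x y : Fin v, x ≠ y → ¬(x ∈ W ∧ y ∈ W) →
      ∃! b, b ∈ B ∧ x ∈ b ∧ y ∈ b)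

/-- Covered pairs of an IGDD((g;h)^u,K) on `Fin u × Fin g` with hole points
those whose second coordinate is < h. -/
def igddCovered (u g h : ℕ) (x y : Fin u × Fin g) : Prop :=
  x.1 ≠ y.1 ∧ ¬((x.2 : ℕ) < h ∧ (y.2 : ℕ) < h)

/-- Existence of an IGDD((g;h)^u,K). -/
def IsIGDD (g h u : ℕ) (K : Finset ℕ) : Prop :=
  ∃ B : Finset (Finset (Fin u × Fin g)),
    (∀ b ∈ B, b.card ∈ K) ∧
    (∀ x y : Fin u × Fin g, igddCovered u g h x y →
      ∃! b, b ∈ B ∧ x ∈ b ∧ y ∈ b) ∧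
    (∀ x y : Fin u × Fin g, x ≠ y → ¬ igddCovered u g h x y →
      ∀ b ∈ B, ¬(x ∈ b ∧ y ∈ b))

open Finset Function

section Designs

variable {α β : Type*}

structure IsIPBDOn (K : Finset ℕ) (W : Finset α) (B : Finset (Finset α)) : Prop where
  card_mem : ∀ b ∈ B, b.card ∈ K
  eq_of_mem_hole : ∀ b ∈ B, ∀ p ∈ W, ∀ q ∈ W, p ∈ b → q ∈ b → p = q
  existsUnique : ∀ p q, p ≠ q → ¬(p ∈ W ∧ q ∈ W) → ∃! b, b ∈ B ∧ p ∈ b ∧ q ∈ b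

theorem isIPBD_iff {v w : ℕ} {K : Finset ℕ} :
    IsIPBD v w K ↔
      ∃ (W : Finset (Fin v)) (B : Finset (Finset (Fin v))), W.card = w ∧ IsIPBDOn K W B :=
  ⟨fun ⟨W, B, hW, h₁, h₂, h₃⟩ => ⟨W, B, hW, h₁, h₂, h₃⟩,
    fun ⟨W, B, hW, h₁, h₂, h₃⟩ => ⟨W, B, hW, h₁, h₂, h₃⟩⟩

theorem isIPBD_self (v : ℕ) (K : Finset ℕ) : IsIPBD v v K :=
  isIPBD_iff.2 ⟨univ, ∅, by simp, by simp, by simp,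
    fun p q _ hpq => absurd ⟨mem_univ p, mem_univ q⟩ hpq⟩

theorem IsIPBDOn.map_equiv [DecidableEq β] {K : Finset ℕ} {W : Finset α} {B : Finset (Finset α)}
    (hd : IsIPBDOn K W B) (e : α ≃ β) {W' : Finset β} (hW : ∀ a, e a ∈ W' ↔ a ∈ W) :
    IsIPBDOn K W' (B.image (map e.toEmbedding)) where
  card_mem := by
    simp only [mem_image, forall_exists_index, and_imp, forall_apply_eq_imp_iff₂, card_map]
    exact hd.card_mem
  eq_of_mem_hole := by
    simp only [mem_image, forall_exists_index, and_imp, forall_apply_eq_imp_iff₂]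
    intro b hb p hp q hq hpb hqb
    rw [← e.apply_symm_apply p, hW] at hp
    rw [← e.apply_symm_apply q, hW] at hq
    rw [mem_map_equiv] at hpb hqb
    exact e.symm.injective (hd.eq_of_mem_hole b hb _ hp _ hq hpb hqb)
  existsUnique p q hpq hW' := by
    have hW'' : ¬(e.symm p ∈ W ∧ e.symm q ∈ W) := by simpa [← hW] using hW'
    obtain ⟨b, ⟨hb, hpb, hqb⟩, hunique⟩ := hd.existsUnique _ _ (by simpa using hpq) hW''
    refine ⟨b.map e.toEmbedding, ⟨mem_image_of_mem _ hb, by simpa [mem_map_equiv],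
      by simpa [mem_map_equiv]⟩, ?_⟩
    simp only [mem_image, and_imp, forall_exists_index]
    rintro _ c hc rfl hpc hqc
    rw [mem_map_equiv] at hpc hqc
    rw [hunique c ⟨hc, hpc, hqc⟩]

theorem IsIPBDOn.isIPBD [Fintype α] {K : Finset ℕ} {W : Finset α}
    {B : Finset (Finset α)} (hd : IsIPBDOn K W B) {v w : ℕ} (hv : Fintype.card α = v)
    (hw : W.card = w) : IsIPBD v w K := by
  let e := Fintype.equivFinOfCardEq hv
  exact isIPBD_iff.2
    ⟨_, _, by simpa using hw, hd.map_equiv e (W' := W.map e.toEmbedding) (by simp)⟩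

theorem exists_equiv_mem_iff [Fintype α] [Fintype β] [DecidableEq α] [DecidableEq β]
    (s : Finset α) (t : Finset β) (hcard : Fintype.card α = Fintype.card β)
    (hst : s.card = t.card) : ∃ e : α ≃ β, ∀ a, e a ∈ t ↔ a ∈ s := by
  obtain ⟨e₁⟩ : Nonempty ({a // a ∈ s} ≃ {b // b ∈ t}) := Fintype.card_eq.1 (by simpa)
  obtain ⟨e₂⟩ : Nonempty ({a // a ∉ s} ≃ {b // b ∉ t}) :=
    Fintype.card_eq.1 (by simp [Fintype.card_subtype_compl, hcard, hst])
  refine ⟨(Equiv.sumCompl _).symm.trans ((e₁.sumCongr e₂).trans (Equiv.sumCompl _)), fun a => ?_⟩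
  by_cases ha : a ∈ s
  · simp [ha]
  · simpa [ha] using (e₂ ⟨a, ha⟩).2

end Designs

section Fill

variable {ι G Y : Type*}

structure IsIGDDOn (K : Finset ℕ) (H : Finset G) (B : Finset (Finset (ι × G))) : Prop where
  card_mem : ∀ b ∈ B, b.card ∈ K
  existsUnique : ∀ p q : ι × G, p.1 ≠ q.1 → ¬(p.2 ∈ H ∧ q.2 ∈ H) →
    ∃! b, b ∈ B ∧ p ∈ b ∧ q ∈ b
  not_mem : ∀ p q : ι × G, p ≠ q → ¬(p.1 ≠ q.1 ∧ ¬(p.2 ∈ H ∧ q.2 ∈ H)) →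
    ∀ b ∈ B, ¬(p ∈ b ∧ q ∈ b)

theorem IsIGDD.exists_isIGDDOn {g h u : ℕ} {K : Finset ℕ} (hd : IsIGDD g h u K) :
    ∃ B : Finset (Finset (Fin u × Fin g)), IsIGDDOn K {j : Fin g | (j : ℕ) < h} B := by
  obtain ⟨B, h₁, h₂, h₃⟩ := hd
  exact ⟨B, h₁, fun p q hpq hH => h₂ p q ⟨hpq, by simpa using hH⟩,
    fun p q hpq hH => h₃ p q hpq (by simpa [igddCovered] using hH)⟩

def groupEmb (i : ι) : G ⊕ Y ↪ (ι × G) ⊕ Y :=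
  (Embedding.sectR i G).sumMap (Embedding.refl Y)

@[simp]
theorem groupEmb_inl (i : ι) (a : G) : groupEmb (Y := Y) i (.inl a) = .inl (i, a) := rfl

@[simp]
theorem groupEmb_inr (i : ι) (y : Y) : groupEmb (G := G) i (.inr y) = .inr y := rfl

theorem groupEmb_mem_map_groupEmb {i j : ι} {a : G ⊕ Y} {c : Finset (G ⊕ Y)} :
    groupEmb i a ∈ c.map (groupEmb j) ↔ (j = i ∨ a.isRight) ∧ a ∈ c := by
  cases a <;> simp [Sum.exists, and_comm, eq_comm]

theorem groupEmb_mem_hole [Fintype ι] [Fintype Y] {H : Finset G} {i : ι} {a : G ⊕ Y} :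
    groupEmb i a ∈ (univ ×ˢ H).disjSum univ ↔ a ∈ H.disjSum univ := by
  cases a <;> simp

theorem mem_disjSum_univ_of_isRight [Fintype Y] {s : Finset G} {a : G ⊕ Y} (h : a.isRight) :
    a ∈ s.disjSum univ := by
  obtain ⟨y, rfl⟩ := Sum.isRight_iff.1 h
  simp

variable [DecidableEq ι] [DecidableEq G] [DecidableEq Y] [Fintype ι]

def fillBlocks (B₀ : Finset (Finset (ι × G))) (B₁ : Finset (Finset (G ⊕ Y))) :
    Finset (Finset ((ι × G) ⊕ Y)) :=
  B₀.image (·.disjSum ∅) ∪ (univ ×ˢ B₁).image fun ic => ic.2.map (groupEmb ic.1)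

theorem mem_fillBlocks {B₀ : Finset (Finset (ι × G))} {B₁ : Finset (Finset (G ⊕ Y))}
    {b : Finset ((ι × G) ⊕ Y)} :
    b ∈ fillBlocks B₀ B₁ ↔
      (∃ c ∈ B₀, c.disjSum ∅ = b) ∨ ∃ i, ∃ c ∈ B₁, c.map (groupEmb i) = b := by
  simp [fillBlocks]

variable {K : Finset ℕ} {H : Finset G} {B₀ : Finset (Finset (ι × G))} {B₁ : Finset (Finset (G ⊕ Y))}

theorem existsUnique_inl_mem_fillBlocks (h₀ : IsIGDDOn K H B₀) {p q : ι × G}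
    (hpq : p.1 ≠ q.1) (hH : ¬(p.2 ∈ H ∧ q.2 ∈ H)) :
    ∃! blk, blk ∈ fillBlocks B₀ B₁ ∧ .inl p ∈ blk ∧ .inl q ∈ blk := by
  obtain ⟨c, ⟨hc, hpc, hqc⟩, hunique⟩ := h₀.existsUnique p q hpq hH
  refine ⟨c.disjSum ∅, ⟨mem_fillBlocks.2 (.inl ⟨c, hc, rfl⟩), inl_mem_disjSum.2 hpc,
    inl_mem_disjSum.2 hqc⟩, ?_⟩
  rintro blk ⟨hblk, hp, hq⟩
  obtain ⟨c', hc', rfl⟩ | ⟨j, c', hc', rfl⟩ := mem_fillBlocks.1 hblk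
  · rw [hunique c' ⟨hc', inl_mem_disjSum.1 hp, inl_mem_disjSum.1 hq⟩]
  · rw [← groupEmb_inl p.1 p.2, groupEmb_mem_map_groupEmb] at hp
    rw [← groupEmb_inl q.1 q.2, groupEmb_mem_map_groupEmb] at hq
    simp only [Sum.isRight_inl, Bool.false_eq_true, or_false] at hp hq
    exact absurd (hp.1.symm.trans hq.1) hpq

variable [Fintype Y]

theorem existsUnique_groupEmb_mem_fillBlocks (h₀ : IsIGDDOn K H B₀)
    (h₁ : IsIPBDOn K (H.disjSum univ) B₁) (i : ι) {a b : G ⊕ Y} (hab : a ≠ b)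
    (hH : ¬(a ∈ H.disjSum univ ∧ b ∈ H.disjSum univ)) :
    ∃! blk, blk ∈ fillBlocks B₀ B₁ ∧ groupEmb i a ∈ blk ∧ groupEmb i b ∈ blk := by
  obtain ⟨c, ⟨hc, hac, hbc⟩, hunique⟩ := h₁.existsUnique a b hab hH
  refine ⟨c.map (groupEmb i), ⟨mem_fillBlocks.2 (.inr ⟨i, c, hc, rfl⟩), mem_map_of_mem _ hac,
    mem_map_of_mem _ hbc⟩, ?_⟩
  rintro blk ⟨hblk, ha, hb⟩
  obtain ⟨c', hc', rfl⟩ | ⟨j, c', hc', rfl⟩ := mem_fillBlocks.1 hblk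
  · cases a <;> cases b <;> simp only [groupEmb_inl, groupEmb_inr, inl_mem_disjSum,
      inr_mem_disjSum, notMem_empty] at ha hb
    refine absurd ⟨ha, hb⟩ (h₀.not_mem _ _ ?_ ?_ c' hc')
    · simpa using hab
    · exact fun h => h.1 rfl
  · rw [groupEmb_mem_map_groupEmb] at ha hb
    obtain rfl : j = i := by
      by_contra hji
      exact hH ⟨mem_disjSum_univ_of_isRight (ha.1.resolve_left hji),
        mem_disjSum_univ_of_isRight (hb.1.resolve_left hji)⟩
    rw [hunique c' ⟨hc', ha.2, hb.2⟩]

theorem IsIGDDOn.fill (h₀ : IsIGDDOn K H B₀) (h₁ : IsIPBDOn K (H.disjSum univ) B₁) :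
    IsIPBDOn K ((univ ×ˢ H).disjSum univ) (fillBlocks B₀ B₁) where
  card_mem b hb := by
    obtain ⟨c, hc, rfl⟩ | ⟨i, c, hc, rfl⟩ := mem_fillBlocks.1 hb
    · simpa using h₀.card_mem c hc
    · rw [card_map]; exact h₁.card_mem c hc
  eq_of_mem_hole b hb p hp q hq hpb hqb := by
    obtain ⟨c, hc, rfl⟩ | ⟨i, c, hc, rfl⟩ := mem_fillBlocks.1 hb
    · rcases p with p | _ <;> rcases q with q | _ <;> simp only [inl_mem_disjSum,
        inr_mem_disjSum, notMem_empty] at hpb hqb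
      by_contra hne
      refine h₀.not_mem p q (ne_of_apply_ne _ hne) (fun h => h.2 ⟨?_, ?_⟩) c hc ⟨hpb, hqb⟩
      · simpa using hp
      · simpa using hq
    · rw [mem_map] at hpb hqb
      obtain ⟨a, hac, rfl⟩ := hpb
      obtain ⟨b, hbc, rfl⟩ := hqb
      rw [groupEmb_mem_hole] at hp hq
      rw [h₁.eq_of_mem_hole c hc a hp b hq hac hbc]
  existsUnique p q hpq hH := by
    rcases p with ⟨i, a⟩ | y <;> rcases q with ⟨j, b⟩ | z
    · by_cases hij : i = j
      · subst hij
        exact existsUnique_groupEmb_mem_fillBlocks h₀ h₁ i (a := .inl a) (b := .inl b)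
          (by simpa using hpq) (by simpa using hH)
      · exact existsUnique_inl_mem_fillBlocks h₀ hij (by simpa using hH)
    · exact existsUnique_groupEmb_mem_fillBlocks h₀ h₁ i (a := .inl a) (b := .inr z)
        (by simp) (by simpa using hH)
    · exact existsUnique_groupEmb_mem_fillBlocks h₀ h₁ j (a := .inr y) (b := .inl b)
        (by simp) (by simpa using hH)
    · exact absurd (by simp) hH

end Fill

theorem igdd_fill_ipbd_general
    (g h u x y : ℕ) (hhg : h ≤ g) (hyx : y ≤ x) (hhy : h ≤ y)
    (hdiff : g - h = x - y)
    (K : Finset ℕ)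
    (higdd : IsIGDD g h u K) (hipbd : IsIPBD x y K) :
    IsIPBD (u * (x - y) + ((u - 1) * h + y)) ((u - 1) * h + y) K := by
  rcases u with _ | u
  -- for `u = 0` the truncated `u - 1` makes both parameters `y`
  · simpa using isIPBD_self y K
  obtain ⟨B₀, h₀⟩ := higdd.exists_isIGDDOn
  obtain ⟨W₁, B₁, hW₁, h₁⟩ := isIPBD_iff.1 hipbd
  set H : Finset (Fin g) := {j | (j : ℕ) < h}
  have hH : H.card = h := by simp [H, Fin.card_filter_val_lt, hhg]
  obtain ⟨e, he⟩ := exists_equiv_mem_iff W₁ (H.disjSum (univ : Finset (Fin (y - h))))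
    (by simp only [Fintype.card_sum, Fintype.card_fin]; omega)
    (by simp only [hW₁, hH, card_disjSum, card_univ, Fintype.card_fin]; omega)
  refine (h₀.fill (h₁.map_equiv e he)).isIPBD ?_ ?_
  · simp only [Fintype.card_sum, Fintype.card_prod, Fintype.card_fin, Nat.add_sub_cancel]
    rw [show g = x - y + h by omega]
    ring_nf
    omega
  · simp only [hH, card_disjSum, card_product, card_univ, Fintype.card_fin, Nat.add_sub_cancel]
    ring_nf
    omega

/-- If there exist an IGDD((g;h)^u,K) and an IPBD((x;y),K) with
g - h = x - y and y ≥ h, then there exists an IPBD((v;w),K) with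
v - w = u(x-y) and w = (u-1)h + y. -/
theorem igdd_fill_ipbd
    (g h u x y : ℕ) (hhg : h ≤ g) (hyx : y ≤ x) (hhy : h ≤ y)
    (hdiff : g - h = x - y)
    (K : Finset ℕ) (hK : ∀ k ∈ K, 2 ≤ k)
    (higdd : IsIGDD g h u K) (hipbd : IsIPBD x y K) :
    IsIPBD (u * (x - y) + ((u - 1) * h + y)) ((u - 1) * h + y) K :=
  igdd_fill_ipbd_general g h u x y hhg hyx hhy hdiff K higdd hipbd
end

section
/- If t mutually orthogonal incomplete latin squares of side n with a common hole of size m exist (t-IMOLS(n;m)) with n > m ≥ 1, then n ≥ (t+1)m. -/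
/-- `L` is an incomplete latin square of side `n` with hole `M`:
cells with both coordinates in `M` are empty, all other cells are filled,
rows and columns have no repeated symbols, and symbols of `M` do not appear
in rows or columns indexed by `M`. -/
def IsILS (n : ℕ) (M : Finset (Fin n)) (L : Fin n → Fin n → Option (Fin n)) : Prop :=
  (∀ i j : Fin n, L i j = none ↔ (i ∈ M ∧ j ∈ M)) ∧
  (∀ i j j' : Fin n, ∀ s : Fin n, L i j = some s → L i j' = some s → j = j') ∧
  (∀ i i' j : Fin n, ∀ s : Fin n, L i j = some s → L i' j = some s → i = i') ∧
  (∀ i j : Fin n, ∀ s ∈ M, (i ∈ M ∨ j ∈ M) → L i j ≠ some s)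

/-- Two incomplete latin squares with common hole `M` are orthogonal: every
ordered pair of symbols not both in `M` occurs exactly once upon superposition. -/
def ILSOrthogonal (n : ℕ) (M : Finset (Fin n))
    (L L' : Fin n → Fin n → Option (Fin n)) : Prop :=
  ∀ s s' : Fin n, ¬(s ∈ M ∧ s' ∈ M) →
    ∃! p : Fin n × Fin n, L p.1 p.2 = some s ∧ L' p.1 p.2 = some s'

/-!
Fix a column `j` outside the hole. In each of the `t` squares, column `j` is a permutation of
the symbols, so the `m` hole symbols sit in `m` rows of column `j`, all outside the hole. No cell
carries a hole symbol in two different squares: if `L a` has hole symbol `x` at a cell where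
`L b` has a hole symbol, then the `n - m` pairs `(x, s')` with `s' ∉ M` need `n - m` further cells
holding `x` in `L a`, but `x` occupies at most one cell in each of the `n - m` rows outside the
hole. Hence the `t * m` rows found are distinct elements of the complement of the hole, so
`t * m ≤ n - m`.
-/

open Finset

section

variable {n : ℕ} {M : Finset (Fin n)} {L L' : Fin n → Fin n → Option (Fin n)}

def symbolCells (L : Fin n → Fin n → Option (Fin n)) (s : Fin n) : Finset (Fin n × Fin n) :=
  {p | L p.1 p.2 = some s}

@[simp]
lemma mem_symbolCells {s : Fin n} {p : Fin n × Fin n} :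
    p ∈ symbolCells L s ↔ L p.1 p.2 = some s := by
  simp [symbolCells]

namespace IsILS

lemma exists_eq_some_of_notMem (hL : IsILS n M L) (i : Fin n) {j : Fin n} (hj : j ∉ M) :
    ∃ s, L i j = some s :=
  Option.ne_none_iff_exists'.mp fun h => hj ((hL.1 i j).mp h).2

lemma exists_row_eq_some (hL : IsILS n M L) {j : Fin n} (hj : j ∉ M) (s : Fin n) :
    ∃ i, L i j = some s := by
  choose col hcol using fun i => hL.exists_eq_some_of_notMem i hj
  have hinj : Function.Injective col := fun i i' h =>
    hL.2.2.1 i i' j (col i) (hcol i) (h ▸ hcol i')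
  obtain ⟨i, rfl⟩ := Finite.injective_iff_surjective.mp hinj s
  exact ⟨i, hcol i⟩

lemma row_notMem_of_eq_some (hL : IsILS n M L) {i j s : Fin n} (h : L i j = some s)
    (hs : s ∈ M) : i ∉ M :=
  fun hi => hL.2.2.2 i j s hs (Or.inl hi) h

lemma card_symbolCells_le (hL : IsILS n M L) {s : Fin n} (hs : s ∈ M) :
    #(symbolCells L s) ≤ #Mᶜ := by
  refine card_le_card_of_injOn Prod.fst (fun p hp => ?_) fun p hp q hq hpq => ?_
  · simpa using hL.row_notMem_of_eq_some (mem_symbolCells.mp hp) hs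
  · simp only [mem_coe, mem_symbolCells] at hp hq
    exact Prod.ext hpq (hL.2.1 p.1 p.2 q.2 s hp (hpq ▸ hq))

end IsILS

namespace ILSOrthogonal

/-- Each of the pairs `(s, u)` with `u ∉ M` needs its own cell holding `s` in `L`, and a cell
where `L'` shows a hole symbol is none of them. -/
lemma card_compl_lt_card_symbolCells (h : ILSOrthogonal n M L L') {i j s s' : Fin n}
    (hs : L i j = some s) (hs' : L' i j = some s') (hs'M : s' ∈ M) :
    #Mᶜ < #(symbolCells L s) := by
  have hcell : ∀ u ∈ Mᶜ, ∃ p : Fin n × Fin n, L p.1 p.2 = some s ∧ L' p.1 p.2 = some u :=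
    fun u hu => (h s u fun hM => (mem_compl.mp hu) hM.2).exists
  choose! cell hcellL hcellL' using hcell
  have hmaps : Set.MapsTo cell (Mᶜ : Finset (Fin n)) ((symbolCells L s).erase (i, j)) := by
    intro u hu
    refine mem_erase.mpr ⟨fun hij => ?_, mem_symbolCells.mpr (hcellL u hu)⟩
    have hus' : u = s' := Option.some.inj ((hcellL' u hu).symm.trans (hij ▸ hs'))
    exact mem_compl.mp hu (hus' ▸ hs'M)
  have hinj : Set.InjOn cell (Mᶜ : Finset (Fin n)) := fun u hu v hv huv =>
    Option.some.inj ((hcellL' u hu).symm.trans (huv ▸ hcellL' v hv))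
  exact (card_le_card_of_injOn cell hmaps hinj).trans_lt
    (card_erase_lt_of_mem (mem_symbolCells.mpr hs : (i, j) ∈ _))

lemma notMem_of_mem (h : ILSOrthogonal n M L L') (hL : IsILS n M L) {i j s s' : Fin n}
    (hs : L i j = some s) (hs' : L' i j = some s') (hsM : s ∈ M) : s' ∉ M :=
  fun hs'M => (h.card_compl_lt_card_symbolCells hs hs' hs'M).not_ge (hL.card_symbolCells_le hsM)

end ILSOrthogonal

end

theorem imols_inequality_general
    (t n m : ℕ) (hmn : m < n)
    (M : Finset (Fin n)) (hMcard : M.card = m)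
    (L : Fin t → Fin n → Fin n → Option (Fin n))
    (hils : ∀ a : Fin t, IsILS n M (L a))
    (horth : ∀ a b : Fin t, a ≠ b → ILSOrthogonal n M (L a) (L b)) :
    (t + 1) * m ≤ n := by
  obtain ⟨j, hj⟩ : ∃ j, j ∉ M := by
    by_contra! hM
    have : #M = n := by simp [eq_univ_of_forall hM]
    omega
  choose row hrow using fun q : Fin t × Fin n => (hils q.1).exists_row_eq_some hj q.2
  have hmaps : Set.MapsTo row (univ ×ˢ M : Finset (Fin t × Fin n)) (Mᶜ : Finset (Fin n)) := fun q hq =>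
    mem_compl.mpr ((hils q.1).row_notMem_of_eq_some (hrow q) (mem_product.mp hq).2)
  have hinj : Set.InjOn row (univ ×ˢ M : Finset (Fin t × Fin n)) := by
    rintro ⟨a, x⟩ hx ⟨b, y⟩ hy hxy
    have hyb : L b (row (a, x)) j = some y := hxy ▸ hrow (b, y)
    obtain rfl | hab := eq_or_ne a b
    · exact Prod.ext rfl (Option.some.inj ((hrow (a, x)).symm.trans hyb))
    · exact ((horth a b hab).notMem_of_mem (hils a) (hrow (a, x)) hyb
        (mem_product.mp hx).2 (mem_product.mp hy).2).elim
  have hcard := card_le_card_of_injOn row hmaps hinj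
  rw [card_product, card_univ, Fintype.card_fin, card_compl, Fintype.card_fin, hMcard] at hcard
  rw [add_one_mul]
  omega

/-- If t-IMOLS(n;m) exist with n > m ≥ 1, then n ≥ (t+1)m. -/
theorem imols_inequality
    (t n m : ℕ) (hm : 1 ≤ m) (hmn : m < n)
    (M : Finset (Fin n)) (hMcard : M.card = m)
    (L : Fin t → Fin n → Fin n → Option (Fin n))
    (hils : ∀ a : Fin t, IsILS n M (L a))
    (horth : ∀ a b : Fin t, a ≠ b → ILSOrthogonal n M (L a) (L b)) :
    (t + 1) * m ≤ n :=
  imols_inequality_general t n m hmn M hMcard L hils horth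
end

section
/- The number of blocks b of a (v,k,1)-packing satisfies b ≤ ⌊(v/k)·⌊(v-1)/(k-1)⌋⌋ (the Johnson bound). -/
/-- Johnson bound: the number of blocks of a (v,k,1)-packing is
at most ⌊(v/k)·⌊(v-1)/(k-1)⌋⌋. -/
theorem johnson_bound
    (v k : ℕ) (hk : 2 ≤ k)
    (B : Finset (Finset (Fin v)))
    (hsize : ∀ b ∈ B, b.card = k)
    (hpack : ∀ x y : Fin v, x ≠ y →
      (B.filter (fun b => x ∈ b ∧ y ∈ b)).card ≤ 1) :
    B.card ≤ v * ((v - 1) / (k - 1)) / k := by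
  have hk1 : 0 < k - 1 := by omega
  have hk0 : 0 < k := by omega
  set r := (v - 1) / (k - 1) with hr
  -- Step 1: each point lies in at most r blocks
  have hpoint : ∀ x : Fin v, (B.filter (fun b => x ∈ b)).card ≤ r := by
    intro x
    set S := B.filter (fun b => x ∈ b) with hS
    have hdisj : ∀ b ∈ S, ∀ b' ∈ S, b ≠ b' →
        Disjoint (b.erase x) (b'.erase x) := by
      intro b hb b' hb' hne
      rw [Finset.mem_filter] at hb hb'
      rw [Finset.disjoint_left]
      intro y hy hy'
      have hyx : y ≠ x := Finset.ne_of_mem_erase hy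
      have hyb : y ∈ b := Finset.mem_of_mem_erase hy
      have hyb' : y ∈ b' := Finset.mem_of_mem_erase hy'
      have h2 : ({b, b'} : Finset (Finset (Fin v))) ⊆
          B.filter (fun c => x ∈ c ∧ y ∈ c) := by
        intro c hc
        rw [Finset.mem_insert, Finset.mem_singleton] at hc
        rcases hc with rfl | rfl <;> exact Finset.mem_filter.2 ⟨‹_ ∈ B ∧ _›.1, ‹_ ∈ B ∧ _›.2, by assumption⟩
      have hcard2 : ({b, b'} : Finset (Finset (Fin v))).card = 2 := by
        rw [Finset.card_insert_of_notMem (by simpa using hne), Finset.card_singleton]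
      have := Finset.card_le_card h2
      have := hpack x y hyx.symm
      omega
    have hunion : (S.biUnion (fun b => b.erase x)).card
        = ∑ b ∈ S, (b.erase x).card := Finset.card_biUnion hdisj
    have hsub : S.biUnion (fun b => b.erase x) ⊆ Finset.univ.erase x := by
      intro y hy
      rw [Finset.mem_biUnion] at hy
      obtain ⟨b, _, hyb⟩ := hy
      exact Finset.mem_erase.2 ⟨Finset.ne_of_mem_erase hyb, Finset.mem_univ y⟩
    have hbound : ∑ b ∈ S, (b.erase x).card ≤ v - 1 := by
      rw [← hunion]
      calc (S.biUnion (fun b => b.erase x)).card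
          ≤ (Finset.univ.erase x).card := Finset.card_le_card hsub
        _ = v - 1 := by rw [Finset.card_erase_of_mem (Finset.mem_univ x)]; simp
    have heach : ∀ b ∈ S, (b.erase x).card = k - 1 := by
      intro b hb
      rw [Finset.mem_filter] at hb
      rw [Finset.card_erase_of_mem hb.2, hsize b hb.1]
    rw [Finset.sum_congr rfl heach, Finset.sum_const, smul_eq_mul] at hbound
    rw [hr, Nat.le_div_iff_mul_le hk1]
    exact hbound
  -- Step 2: double counting
  have hcount : ∑ b ∈ B, b.card = ∑ x : Fin v, (B.filter (fun b => x ∈ b)).card := by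
    simp_rw [Finset.card_filter]
    rw [Finset.sum_comm]
    refine Finset.sum_congr rfl fun b _ => ?_
    simp [Finset.card_filter]
  have hsum : ∑ b ∈ B, b.card = B.card * k := by
    rw [Finset.sum_congr rfl hsize, Finset.sum_const, smul_eq_mul]
  have htot : B.card * k ≤ v * r := by
    calc B.card * k = ∑ x : Fin v, (B.filter (fun b => x ∈ b)).card := by
          rw [← hsum, hcount]
      _ ≤ ∑ _x : Fin v, r := Finset.sum_le_sum fun x _ => hpoint x
      _ = v * r := by simp [mul_comm]
  rw [Nat.le_div_iff_mul_le hk0]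
  exact htot
end

section
/- If an IPBD((v;w),K) exists with v > w and v = (k-1)w + 1 where k = min K, then every block has size exactly k and every block intersects the hole W. -/
/-- In an IPBD((v;w),K) with v > w and v = (k-1)w + 1 where
k = min K, every block has size exactly k and meets the hole. -/
theorem ipbd_extremal_blocks
    (v w k : ℕ) (hwv : w < v) (hv : v = (k - 1) * w + 1)
    (K : Finset ℕ) (hK : ∀ j ∈ K, 2 ≤ j)
    (hkK : k ∈ K) (hkmin : ∀ j ∈ K, k ≤ j)
    (W : Finset (Fin v)) (hWcard : W.card = w)
    (B : Finset (Finset (Fin v)))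
    (hsize : ∀ b ∈ B, b.card ∈ K)
    (hhole : ∀ b ∈ B, ∀ x ∈ W, ∀ y ∈ W, x ∈ b → y ∈ b → x = y)
    (hcover : ∀ x y : Fin v, x ≠ y → ¬(x ∈ W ∧ y ∈ W) →
      ∃! b, b ∈ B ∧ x ∈ b ∧ y ∈ b) :
    ∀ b ∈ B, b.card = k ∧ ∃ p ∈ W, p ∈ b := by
  classical
  have hk2 : 2 ≤ k := hK k hkK
  have main : ∀ x : Fin v, x ∉ W → ∀ b ∈ B, x ∈ b →
      b.card = k ∧ ∃ p ∈ W, p ∈ b := by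
    intro x hxW
    set S := B.filter (fun b => x ∈ b) with hS
    have hSmem : ∀ b, b ∈ S ↔ b ∈ B ∧ x ∈ b := by
      intro b; simp [hS]
    -- blocks through x are pairwise intersecting only in x
    have hdisj : ∀ b₁ ∈ S, ∀ b₂ ∈ S, b₁ ≠ b₂ →
        Disjoint (b₁.erase x) (b₂.erase x) := by
      intro b₁ hb₁ b₂ hb₂ hne
      rw [Finset.disjoint_left]
      intro y hy₁ hy₂
      have hyb₁ := Finset.mem_of_mem_erase hy₁
      have hyx := Finset.ne_of_mem_erase hy₁
      have hyb₂ := Finset.mem_of_mem_erase hy₂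
      obtain ⟨b₁B, xb₁⟩ := (hSmem b₁).1 hb₁
      obtain ⟨b₂B, xb₂⟩ := (hSmem b₂).1 hb₂
      have hxy : x ≠ y := fun h => hyx (h.symm)
      have hnW : ¬(x ∈ W ∧ y ∈ W) := fun h => hxW h.1
      obtain ⟨b, _, huniq⟩ := hcover x y hxy hnW
      exact hne ((huniq b₁ ⟨b₁B, xb₁, hyb₁⟩).trans (huniq b₂ ⟨b₂B, xb₂, hyb₂⟩).symm)
    -- the blocks through x cover everything except x
    have hunion : S.biUnion (fun b => b.erase x) = Finset.univ.erase x := by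
      apply Finset.ext
      intro y
      constructor
      · intro hy
        obtain ⟨b, hb, hyb⟩ := Finset.mem_biUnion.1 hy
        exact Finset.mem_erase.2 ⟨Finset.ne_of_mem_erase hyb, Finset.mem_univ y⟩
      · intro hy
        have hyx : y ≠ x := Finset.ne_of_mem_erase hy
        have hnW : ¬(x ∈ W ∧ y ∈ W) := fun h => hxW h.1
        obtain ⟨b, ⟨hbB, hxb, hyb⟩, _⟩ := hcover x y (fun h => hyx h.symm) hnW
        exact Finset.mem_biUnion.2 ⟨b, (hSmem b).2 ⟨hbB, hxb⟩,
          Finset.mem_erase.2 ⟨hyx, hyb⟩⟩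
    have hsum : ∑ b ∈ S, (b.erase x).card = v - 1 := by
      rw [← Finset.card_biUnion hdisj, hunion, Finset.card_erase_of_mem (Finset.mem_univ x)]
      simp
    have hlow : ∀ b ∈ S, k - 1 ≤ (b.erase x).card := by
      intro b hb
      obtain ⟨hbB, hxb⟩ := (hSmem b).1 hb
      have hk : k ≤ b.card := hkmin _ (hsize b hbB)
      rw [Finset.card_erase_of_mem hxb]
      omega
    have hv1 : v - 1 = (k - 1) * w := by omega
    -- injection from W into blocks through x
    have hblk : ∀ p : Fin v, ∃ b, p ∈ W → b ∈ S ∧ p ∈ b := by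
      intro p
      by_cases hp : p ∈ W
      · have hxp : x ≠ p := fun h => hxW (h ▸ hp)
        have hnW : ¬(x ∈ W ∧ p ∈ W) := fun h => hxW h.1
        obtain ⟨b, ⟨hbB, hxb, hpb⟩, _⟩ := hcover x p hxp hnW
        exact ⟨b, fun _ => ⟨(hSmem b).2 ⟨hbB, hxb⟩, hpb⟩⟩
      · exact ⟨∅, fun h => absurd h hp⟩
    choose f hf using hblk
    have hinj : Set.InjOn f W := by
      intro p hp q hq hfeq
      obtain ⟨hfpS, hpf⟩ := hf p hp
      obtain ⟨hfqS, hqf⟩ := hf q hq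
      have hbB := ((hSmem (f p)).1 hfpS).1
      exact hhole (f p) hbB p hp q hq hpf (hfeq ▸ hqf)
    have himg : Finset.image f W ⊆ S := by
      intro b hb
      obtain ⟨p, hp, rfl⟩ := Finset.mem_image.1 hb
      exact (hf p hp).1
    have hwS : w ≤ S.card := by
      rw [← hWcard, ← Finset.card_image_of_injOn hinj]
      exact Finset.card_le_card himg
    -- upper bound on the number of blocks through x
    have hsum_low : S.card * (k - 1) ≤ v - 1 := by
      calc S.card * (k - 1) = ∑ _b ∈ S, (k - 1) := by
            rw [Finset.sum_const, smul_eq_mul, mul_comm]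
        _ ≤ ∑ b ∈ S, (b.erase x).card := Finset.sum_le_sum hlow
        _ = v - 1 := hsum
    have hSw : S.card = w := by
      have hk1 : 1 ≤ k - 1 := by omega
      have hle : S.card ≤ w := by
        rw [hv1, mul_comm S.card] at hsum_low
        exact Nat.le_of_mul_le_mul_left hsum_low (by omega)
      omega
    -- every block through x has exactly k points
    have hcards : ∀ b ∈ S, (b.erase x).card = k - 1 := by
      by_contra hcon
      push_neg at hcon
      obtain ⟨b₀, hb₀, hne⟩ := hcon
      have hlt : k - 1 < (b₀.erase x).card := lt_of_le_of_ne (hlow b₀ hb₀) (Ne.symm hne)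
      have : ∑ _b ∈ S, (k - 1) < ∑ b ∈ S, (b.erase x).card :=
        Finset.sum_lt_sum hlow ⟨b₀, hb₀, hlt⟩
      rw [Finset.sum_const, smul_eq_mul, hsum, hv1, hSw, mul_comm] at this
      omega
    -- the injection is a bijection: every block through x meets W
    have himg_eq : Finset.image f W = S := by
      apply Finset.eq_of_subset_of_card_le himg
      rw [Finset.card_image_of_injOn hinj, hWcard, hSw]
    intro b hbB hxb
    have hbS : b ∈ S := (hSmem b).2 ⟨hbB, hxb⟩
    constructor
    · have := hcards b hbS
      rw [Finset.card_erase_of_mem hxb] at this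
      have hk : k ≤ b.card := hkmin _ (hsize b hbB)
      omega
    · obtain ⟨p, hp, rfl⟩ := Finset.mem_image.1 (himg_eq ▸ hbS)
      exact ⟨p, hp, (hf p hp).2⟩
  intro b hbB
  have hb2 : 2 ≤ b.card := hK _ (hsize b hbB)
  have hbW1 : (b ∩ W).card ≤ 1 := by
    apply Finset.card_le_one.2
    intro a ha c hc
    rw [Finset.mem_inter] at ha hc
    exact hhole b hbB a ha.2 c hc.2 ha.1 hc.1
  have hsd : 0 < (b \ W).card := by
    have := Finset.card_sdiff_add_card_inter b W
    omega
  obtain ⟨x, hx⟩ := Finset.card_pos.1 hsd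
  rw [Finset.mem_sdiff] at hx
  exact main x hx.2 b hbB hx.1
end

section
/- Let K ⊆ {2,3,...} with α = α(K). If a GDD(α^u w^1, K) exists with u ≥ 1, then w ≡ 0 (mod α) and u(α(u-1) + 2w) ≡ 0 (mod γ), where γ = β(K)/α(K). -/
/-- Part index for the complete multipartite graph with `u` parts of size `a`
and one part of size `w`. -/
def gddPart (u a w : ℕ) (p : (Fin u × Fin a) ⊕ Fin w) : ℕ :=
  Sum.elim (fun q => (q.1 : ℕ)) (fun _ => u) p

/-- If a GDD(α^u w^1, K) exists with u ≥ 1, where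
α = α(K) = gcd{k-1 : k ∈ K}, then α ∣ w and
γ ∣ u(α(u-1) + 2w), where γ = β(K)/α(K). -/
theorem gdd_alpha_divisibility
    (u w a : ℕ) (hu : 1 ≤ u)
    (K : Finset ℕ) (hne : K.Nonempty) (hK : ∀ k ∈ K, 2 ≤ k)
    (ha : a = K.gcd (fun k => k - 1))
    (B : Finset (Finset ((Fin u × Fin a) ⊕ Fin w)))
    (hsize : ∀ b ∈ B, b.card ∈ K)
    (hsame : ∀ x y : (Fin u × Fin a) ⊕ Fin w, x ≠ y →
      gddPart u a w x = gddPart u a w y → ∀ b ∈ B, ¬(x ∈ b ∧ y ∈ b))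
    (hcover : ∀ x y : (Fin u × Fin a) ⊕ Fin w,
      gddPart u a w x ≠ gddPart u a w y → ∃! b, b ∈ B ∧ x ∈ b ∧ y ∈ b) :
    a ∣ w ∧
    (K.gcd (fun k => k * (k - 1)) / a) ∣ u * (a * (u - 1) + 2 * w) := by
  have hak : ∀ k ∈ K, a ∣ k - 1 := fun k hk => ha ▸ Finset.gcd_dvd hk
  obtain ⟨k₀, hk₀⟩ := hne
  have ha0 : 0 < a := by
    rcases Nat.eq_zero_or_pos a with h | h
    · exfalso
      have h1 := hak k₀ hk₀
      rw [h] at h1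
      have h2 := Nat.eq_zero_of_zero_dvd h1
      have h3 := hK k₀ hk₀
      omega
    · exact h
  obtain ⟨v, rfl⟩ : ∃ v, u = v + 1 := ⟨u - 1, by omega⟩
  have hdiff : ∀ b ∈ B, ∀ x ∈ b, ∀ y ∈ b, x ≠ y →
      gddPart (v + 1) a w x ≠ gddPart (v + 1) a w y := by
    intro b hb x hx y hy hxy h
    exact hsame x y hxy h b hb ⟨hx, hy⟩
  -- fiber cardinalities
  have hfib : ∀ i : Fin (v + 1),
      (Finset.univ.filter fun y : (Fin (v + 1) × Fin a) ⊕ Fin w =>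
        gddPart (v + 1) a w y = (i : ℕ)).card = a := by
    intro i
    have himg : (Finset.univ.filter fun y : (Fin (v + 1) × Fin a) ⊕ Fin w =>
        gddPart (v + 1) a w y = (i : ℕ)) =
        (Finset.univ : Finset (Fin a)).image (fun j => Sum.inl (i, j)) := by
      ext y
      simp only [Finset.mem_filter, Finset.mem_univ, true_and, Finset.mem_image]
      constructor
      · intro h
        cases y with
        | inl q =>
          obtain ⟨i', j⟩ := q
          have : (i' : ℕ) = (i : ℕ) := h
          exact ⟨j, by rw [Fin.ext this]⟩
        | inr j =>
          exfalso
          have : ((v + 1) : ℕ) = (i : ℕ) := h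
          have := i.isLt
          omega
      · rintro ⟨j, rfl⟩
        rfl
    rw [himg, Finset.card_image_of_injective _ (fun j j' h => by
      simpa using h)]
    simp
  have hfibw : (Finset.univ.filter fun y : (Fin (v + 1) × Fin a) ⊕ Fin w =>
      gddPart (v + 1) a w y = (v + 1)).card = w := by
    have himg : (Finset.univ.filter fun y : (Fin (v + 1) × Fin a) ⊕ Fin w =>
        gddPart (v + 1) a w y = (v + 1)) =
        (Finset.univ : Finset (Fin w)).image Sum.inr := by
      ext y
      simp only [Finset.mem_filter, Finset.mem_univ, true_and, Finset.mem_image]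
      constructor
      · intro h
        cases y with
        | inl q =>
          exfalso
          have : (q.1 : ℕ) = (v + 1) := h
          have := q.1.isLt
          omega
        | inr j => exact ⟨j, rfl⟩
      · rintro ⟨j, rfl⟩
        rfl
    rw [himg, Finset.card_image_of_injective _ Sum.inr_injective]
    simp
  -- Part 1 : a ∣ w
  have hdvd_w : a ∣ w := by
    have ha0' : (0:ℕ) < v + 1 := by omega
    set x₀ : (Fin (v + 1) × Fin a) ⊕ Fin w := Sum.inl (⟨0, ha0'⟩, ⟨0, ha0⟩) with hx₀
    have hNcard : (Finset.univ.filter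
        (fun y : (Fin (v + 1) × Fin a) ⊕ Fin w =>
          ¬ gddPart (v + 1) a w y = gddPart (v + 1) a w x₀)).card
        = (v + 1) * a + w - a := by
      have h1 := Finset.card_filter_add_card_filter_not
        (s := (Finset.univ : Finset ((Fin (v + 1) × Fin a) ⊕ Fin w)))
        (fun y => gddPart (v + 1) a w y = gddPart (v + 1) a w x₀)
      have h2 : (Finset.univ.filter fun y : (Fin (v + 1) × Fin a) ⊕ Fin w =>
          gddPart (v + 1) a w y = gddPart (v + 1) a w x₀).card = a := by
        have := hfib ⟨0, ha0'⟩
        exact this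
      have h3 : (Finset.univ : Finset ((Fin (v + 1) × Fin a) ⊕ Fin w)).card
          = (v + 1) * a + w := by
        simp [Finset.card_univ]
      rw [h2, h3] at h1
      omega
    have hbiU : (Finset.univ.filter
        (fun y : (Fin (v + 1) × Fin a) ⊕ Fin w =>
          ¬ gddPart (v + 1) a w y = gddPart (v + 1) a w x₀))
        = (B.filter (x₀ ∈ ·)).biUnion (fun b => b.erase x₀) := by
      ext y
      simp only [Finset.mem_filter, Finset.mem_univ, true_and,
        Finset.mem_biUnion, Finset.mem_erase]
      constructor
      · intro hy
        obtain ⟨b, ⟨hbB, hyb, hx₀b⟩, _⟩ := hcover y x₀ hy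
        exact ⟨b, ⟨hbB, hx₀b⟩, fun h => hy (by rw [h]), hyb⟩
      · rintro ⟨b, ⟨hbB, hx₀b⟩, hne', hyb⟩
        exact hdiff b hbB y hyb x₀ hx₀b hne'
    have hdisj : ∀ b ∈ B.filter (x₀ ∈ ·), ∀ b' ∈ B.filter (x₀ ∈ ·),
        b ≠ b' → Disjoint (b.erase x₀) (b'.erase x₀) := by
      intro b hb b' hb' hbb'
      rw [Finset.disjoint_left]
      intro y hy hy'
      obtain ⟨hbB, hx₀b⟩ := Finset.mem_filter.mp hb
      obtain ⟨hb'B, hx₀b'⟩ := Finset.mem_filter.mp hb'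
      obtain ⟨hyne, hyb⟩ := Finset.mem_erase.mp hy
      obtain ⟨_, hyb'⟩ := Finset.mem_erase.mp hy'
      have hne' := hdiff b hbB x₀ hx₀b y hyb (Ne.symm hyne)
      obtain ⟨c, _, hcu⟩ := hcover x₀ y hne'
      exact hbb' ((hcu b ⟨hbB, hx₀b, hyb⟩).trans (hcu b' ⟨hb'B, hx₀b', hyb'⟩).symm)
    have hadvd : a ∣ (v + 1) * a + w - a := by
      rw [← hNcard, hbiU, Finset.card_biUnion hdisj]
      refine Finset.dvd_sum ?_
      intro b hb
      rw [Finset.card_erase_of_mem (Finset.mem_filter.mp hb).2]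
      exact hak b.card (hsize b (Finset.mem_filter.mp hb).1)
    have h4 : (v + 1) * a + w - a = v * a + w := by
      have : (v + 1) * a = v * a + a := by ring
      omega
    rw [h4] at hadvd
    have h5 : a ∣ v * a := dvd_mul_left a v
    have := Nat.dvd_sub hadvd h5
    simpa using this
  refine ⟨hdvd_w, ?_⟩
  -- Part 2
  set β := K.gcd (fun k => k * (k - 1)) with hβ
  have haβ : a ∣ β := Finset.dvd_gcd (fun k hk => (hak k hk).mul_left k)
  set S := Finset.univ.filter
    (fun p : ((Fin (v + 1) × Fin a) ⊕ Fin w) × ((Fin (v + 1) × Fin a) ⊕ Fin w) =>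
      ¬ gddPart (v + 1) a w p.1 = gddPart (v + 1) a w p.2) with hS
  have hbiU : S = B.biUnion Finset.offDiag := by
    ext ⟨x, y⟩
    simp only [hS, Finset.mem_filter, Finset.mem_univ, true_and,
      Finset.mem_biUnion, Finset.mem_offDiag]
    constructor
    · intro hxy
      obtain ⟨b, ⟨hbB, hxb, hyb⟩, _⟩ := hcover x y hxy
      exact ⟨b, hbB, hxb, hyb, fun h => hxy (by rw [h])⟩
    · rintro ⟨b, hbB, hxb, hyb, hne'⟩
      exact hdiff b hbB x hxb y hyb hne'
  have hdisj : ∀ b ∈ B, ∀ b' ∈ B, b ≠ b' →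
      Disjoint b.offDiag b'.offDiag := by
    intro b hb b' hb' hbb'
    rw [Finset.disjoint_left]
    rintro ⟨x, y⟩ hp hp'
    obtain ⟨hxb, hyb, hxy⟩ := Finset.mem_offDiag.mp hp
    obtain ⟨hxb', hyb', _⟩ := Finset.mem_offDiag.mp hp'
    have hne' := hdiff b hb x hxb y hyb hxy
    obtain ⟨c, _, hcu⟩ := hcover x y hne'
    exact hbb' ((hcu b ⟨hb, hxb, hyb⟩).trans (hcu b' ⟨hb', hxb', hyb'⟩).symm)
  have hsum : S.card = ∑ b ∈ B, b.card * (b.card - 1) := by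
    rw [hbiU, Finset.card_biUnion hdisj]
    refine Finset.sum_congr rfl ?_
    intro b _
    rw [Finset.offDiag_card, Nat.mul_sub, Nat.mul_one]
  have hβS : β ∣ S.card := by
    rw [hsum]
    exact Finset.dvd_sum fun b hb => Finset.gcd_dvd (hsize b hb)
  -- compute S.card
  have heq : (Finset.univ.filter
      (fun p : ((Fin (v + 1) × Fin a) ⊕ Fin w) × ((Fin (v + 1) × Fin a) ⊕ Fin w) =>
        gddPart (v + 1) a w p.1 = gddPart (v + 1) a w p.2)).card = (v + 1) * a * a + w * w := by
    rw [Finset.card_filter]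
    rw [Fintype.sum_prod_type]
    have hrow : ∀ x : (Fin (v + 1) × Fin a) ⊕ Fin w,
        (∑ y : (Fin (v + 1) × Fin a) ⊕ Fin w,
          if gddPart (v + 1) a w x = gddPart (v + 1) a w y then 1 else 0) =
        (Finset.univ.filter fun y : (Fin (v + 1) × Fin a) ⊕ Fin w =>
          gddPart (v + 1) a w y = gddPart (v + 1) a w x).card := by
      intro x
      rw [Finset.card_filter]
      refine Finset.sum_congr rfl ?_
      intro y _
      simp [eq_comm]
    calc (∑ x : (Fin (v + 1) × Fin a) ⊕ Fin w, ∑ y : (Fin (v + 1) × Fin a) ⊕ Fin w,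
            if gddPart (v + 1) a w x = gddPart (v + 1) a w y then 1 else 0)
        = ∑ x : (Fin (v + 1) × Fin a) ⊕ Fin w,
            (Finset.univ.filter fun y : (Fin (v + 1) × Fin a) ⊕ Fin w =>
              gddPart (v + 1) a w y = gddPart (v + 1) a w x).card := by
          exact Finset.sum_congr rfl fun x _ => hrow x
      _ = (v + 1) * a * a + w * w := by
          rw [Fintype.sum_sum_type]
          have h1 : ∀ q : Fin (v + 1) × Fin a,
              (Finset.univ.filter fun y : (Fin (v + 1) × Fin a) ⊕ Fin w =>
                gddPart (v + 1) a w y = gddPart (v + 1) a w (Sum.inl q)).card = a := by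
            intro q; exact hfib q.1
          have h2 : ∀ j : Fin w,
              (Finset.univ.filter fun y : (Fin (v + 1) × Fin a) ⊕ Fin w =>
                gddPart (v + 1) a w y = gddPart (v + 1) a w (Sum.inr j)).card = w := by
            intro j; exact hfibw
          rw [Finset.sum_congr rfl fun q _ => h1 q,
            Finset.sum_congr rfl fun j _ => h2 j]
          simp [mul_assoc, mul_comm]
  have hScard : S.card = a * ((v + 1) * (a * ((v + 1) - 1) + 2 * w)) := by
    have h1 := Finset.card_filter_add_card_filter_not
      (s := (Finset.univ : Finset (((Fin (v + 1) × Fin a) ⊕ Fin w) × ((Fin (v + 1) × Fin a) ⊕ Fin w))))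
      (fun p => gddPart (v + 1) a w p.1 = gddPart (v + 1) a w p.2)
    have h3 : (Finset.univ : Finset (((Fin (v + 1) × Fin a) ⊕ Fin w) ×
        ((Fin (v + 1) × Fin a) ⊕ Fin w))).card = ((v + 1) * a + w) * ((v + 1) * a + w) := by
      simp [Finset.card_univ]
    rw [heq, h3] at h1
    have h4 : ((v + 1) * a + w) * ((v + 1) * a + w) =
        (v + 1) * a * a + w * w + a * ((v + 1) * (a * ((v + 1) - 1) + 2 * w)) := by
      simp only [Nat.add_sub_cancel]
      ring
    have h5 : S.card = (Finset.univ.filter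
      (fun p : ((Fin (v + 1) × Fin a) ⊕ Fin w) × ((Fin (v + 1) × Fin a) ⊕ Fin w) =>
        ¬ gddPart (v + 1) a w p.1 = gddPart (v + 1) a w p.2)).card := rfl
    omega
  rw [hScard] at hβS
  have hβeq : a * (β / a) = β := Nat.mul_div_cancel' haβ
  rw [← hβeq] at hβS
  exact (Nat.mul_dvd_mul_iff_left ha0).mp hβS
end
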